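/- Let V : ℝ² → ℝ be continuously differentiable with inf_{x∈ℝ²} V(x) > 0, and suppose that for every x ∈ ℝ² the function t ↦ V(tx) − ½⟨∇V(tx), tx⟩ is nondecreasing on (0, ∞). Then ⟨∇V(x), x⟩ ≥ 0 for all x ∈ ℝ². -/

import Mathlib

open scoped InnerProductSpace

abbrev E2 := EuclideanSpace ℝ (Fin 2)

open Filter Set

/-!
Fix `x` and put `f t = V (t • x)`, so that `t * f' t = ⟪∇V (t • x), t • x⟫`. Monotonicity gives
`t * f' t ≤ 2 * (f t - c)` for `t ≥ 1`, where `c = f 1 - f' 1 / 2`, which says exactly that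
`φ t = (f t - c) / t ^ 2` is nonincreasing on `[1, ∞)`. As `V ≥ m` for some `m`, this gives
`f' 1 / 2 = φ 1 ≥ φ t ≥ (m - c) / t ^ 2 → 0`.
-/

section OneVariable

variable {f f' : ℝ → ℝ} {c : ℝ}

theorem antitoneOn_sub_div_sq {a : ℝ} (ha : 0 < a) (hf : ∀ t ∈ Ici a, HasDerivAt f (f' t) t)
    (hle : ∀ t ∈ Ici a, t * f' t ≤ 2 * (f t - c)) :
    AntitoneOn (fun t => (f t - c) / t ^ 2) (Ici a) := by
  have hderiv : ∀ t ∈ Ici a, HasDerivAt (fun t => (f t - c) / t ^ 2)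
      ((f' t * t ^ 2 - (f t - c) * (2 * t ^ 1)) / (t ^ 2) ^ 2) t := fun t ht =>
    ((hf t ht).sub_const c).div (hasDerivAt_pow 2 t) (by have : 0 < t := ha.trans_le ht; positivity)
  refine antitoneOn_of_hasDerivWithinAt_nonpos (convex_Ici a)
    (fun t ht => (hderiv t ht).continuousAt.continuousWithinAt)
    (fun t ht => (hderiv t (interior_subset ht)).hasDerivWithinAt) fun t ht => ?_
  rw [interior_Ici] at ht
  have ht₀ : 0 < t := ha.trans ht
  have hnum : f' t * t ^ 2 - (f t - c) * (2 * t ^ 1) = t * (t * f' t - 2 * (f t - c)) := by ring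
  rw [hnum]
  have hfactor : t * f' t - 2 * (f t - c) ≤ 0 := by linarith [hle t (mem_Ici_of_Ioi ht)]
  exact div_nonpos_of_nonpos_of_nonneg (mul_nonpos_of_nonneg_of_nonpos ht₀.le hfactor)
    (by positivity)

theorem deriv_one_nonneg_of_bddBelow_of_le (hf : ∀ t ∈ Ici 1, HasDerivAt f (f' t) t)
    (hbdd : BddBelow (f '' Ici 1)) (hmono : ∀ t ∈ Ici 1, f 1 - f' 1 / 2 ≤ f t - t * f' t / 2) :
    0 ≤ f' 1 := by
  set c := f 1 - f' 1 / 2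
  obtain ⟨m, hm⟩ := hbdd
  have hanti := antitoneOn_sub_div_sq (c := c) one_pos hf fun t ht => by linarith [hmono t ht]
  have hbound : ∀ T ∈ Ici (1 : ℝ), (m - c) / T ^ 2 ≤ f' 1 / 2 := fun T hT => calc
    (m - c) / T ^ 2 ≤ (f T - c) / T ^ 2 := by
      gcongr
      exact hm (mem_image_of_mem f hT)
    _ ≤ (f 1 - c) / 1 ^ 2 := hanti self_mem_Ici hT hT
    _ = f' 1 / 2 := by simp [c]
  have hlim : Tendsto (fun T : ℝ => (m - c) / T ^ 2) atTop (nhds 0) :=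
    tendsto_const_nhds.div_atTop (tendsto_pow_atTop two_ne_zero)
  have := le_of_tendsto hlim ((eventually_ge_atTop 1).mono hbound)
  linarith

end OneVariable

theorem hasDerivAt_comp_smul {E : Type*} [NormedAddCommGroup E] [InnerProductSpace ℝ E]
    [CompleteSpace E] {V : E → ℝ} {x : E} {t : ℝ} (hV : DifferentiableAt ℝ V (t • x)) :
    HasDerivAt (fun s : ℝ => V (s • x)) ⟪gradient V (t • x), x⟫_ℝ t := by
  have hline : HasDerivAt (fun s : ℝ => s • x) x t := by
    simpa using (hasDerivAt_id t).smul_const x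
  exact hV.hasGradientAt.hasFDerivAt.comp_hasDerivAt t hline

theorem stmt4 (V : E2 → ℝ) (hV : ContDiff ℝ 1 V)
    (hinf : 0 < ⨅ x : E2, V x)
    (hmono : ∀ x : E2, MonotoneOn
      (fun t : ℝ => V (t • x) - (1 / 2) * ⟪gradient V (t • x), t • x⟫_ℝ)
      (Set.Ioi 0)) :
    ∀ x : E2, 0 ≤ ⟪gradient V x, x⟫_ℝ := by
  intro x
  have hbdd : BddBelow (range V) := by
    by_contra h
    exact hinf.ne' (Real.iInf_of_not_bddBelow h)
  have hbdd_ray : BddBelow ((fun t : ℝ => V (t • x)) '' Ici 1) :=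
    hbdd.mono ((image_subset_range _ _).trans (range_comp_subset_range (· • x) V))
  have hradial := deriv_one_nonneg_of_bddBelow_of_le (f := fun t => V (t • x))
    (fun t _ => hasDerivAt_comp_smul (hV.differentiable one_ne_zero _)) hbdd_ray fun t ht => by
      have h := hmono x (mem_Ioi.2 one_pos) (mem_Ioi.2 (one_pos.trans_le ht)) ht
      simp only [real_inner_smul_right] at h
      linarith
  simpa using hradial
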